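/- For all j ≥ 1, p^(j+1) − p^j ≤ r'(j) < p^(j+1) − p^(j−1). -/
import Mathlib


def r' (p : ℕ) : ℕ → ℕ
  | 0 => p - 1
  | 1 => p ^ 2 - p
  | j + 2 => r' p j + p ^ (j + 2) * (p - 1) - 1

lemma r'_key (p : ℕ) (hp : 2 ≤ p) : ∀ k : ℕ,
    (p ^ (k + 2) - p ^ (k + 1) ≤ r' p (k + 1) ∧ r' p (k + 1) < p ^ (k + 2) - p ^ k) ∧
    (p ^ (k + 3) - p ^ (k + 2) ≤ r' p (k + 2) ∧ r' p (k + 2) < p ^ (k + 3) - p ^ (k + 1)) := by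
  intro k
  induction k with
  | zero =>
    have h1 : r' p 1 = p ^ 2 - p := rfl
    have h2 : r' p 2 = (p - 1) + p ^ 2 * (p - 1) - 1 := rfl
    have hm : p ^ 2 * (p - 1) = p ^ 3 - p ^ 2 := by
      rw [Nat.mul_sub, mul_one, ← pow_succ]
    have e1 : p ^ 1 = p := pow_one p
    have e0 : p ^ 0 = 1 := pow_zero p
    have e2 : p ^ 2 = p * p := sq p
    have e3 : p ^ 3 = p * p * p := by ring
    have hpp : p * 2 ≤ p * p := Nat.mul_le_mul_left p hp
    have hppp : p * p * 2 ≤ p * p * p := Nat.mul_le_mul_left _ hp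
    rw [h1, h2, hm, e0, e1]
    rw [e2, e3] at *
    omega
  | succ k ih =>
    obtain ⟨ih1, ih2⟩ := ih
    refine ⟨ih2, ?_⟩
    obtain ⟨hl, hu⟩ := ih1
    show p ^ (k + 4) - p ^ (k + 3) ≤ r' p (k + 1) + p ^ (k + 3) * (p - 1) - 1 ∧
      r' p (k + 1) + p ^ (k + 3) * (p - 1) - 1 < p ^ (k + 4) - p ^ (k + 2)
    have hsub : p ^ (k + 3) * (p - 1) = p ^ (k + 4) - p ^ (k + 3) := by
      rw [Nat.mul_sub, mul_one, ← pow_succ]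
    rw [hsub]
    set a := p ^ k with ha
    have e1 : p ^ (k + 1) = a * p := by rw [ha]; ring
    have e2 : p ^ (k + 2) = a * p * p := by rw [ha]; ring
    have e3 : p ^ (k + 3) = a * p * p * p := by rw [ha]; ring
    have e4 : p ^ (k + 4) = a * p * p * p * p := by rw [ha]; ring
    have ha1 : 1 ≤ a := Nat.one_le_pow _ _ (by omega)
    have h1 : a * 2 ≤ a * p := Nat.mul_le_mul_left a hp
    have h2 : a * p * 2 ≤ a * p * p := Nat.mul_le_mul_left _ hp
    have h3 : a * p * p * 2 ≤ a * p * p * p := Nat.mul_le_mul_left _ hp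
    have h4 : a * p * p * p * 2 ≤ a * p * p * p * p := Nat.mul_le_mul_left _ hp
    rw [e2] at hl hu
    rw [e2, e3, e4]
    omega

theorem stmt4 (p : ℕ) (hp : 2 ≤ p) : ∀ j : ℕ, 1 ≤ j →
    p ^ (j + 1) - p ^ j ≤ r' p j ∧ r' p j < p ^ (j + 1) - p ^ (j - 1) := by
  intro j hj
  obtain ⟨k, rfl⟩ := Nat.exists_eq_add_of_le' hj
  exact (r'_key p hp k).1
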